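/- arXiv:1912.00141 — 6 statements merged into one kernel-verified Lean document; each statement's English description precedes it below -/
import Mathlib

section
/- If (X_α)_{α∈A} is a family of locally solid vector lattices each having the AM-property, then the product X = ∏_α X_α, equipped with the product topology and pointwise ordering, also has the AM-property. -/
open Filter Topology Bornology Set

/-- A solid subset of a lattice-ordered group. -/
def SolidSet {X : Type*} [Lattice X] [AddCommGroup X] (s : Set X) : Prop :=
  ∀ x y : X, |x| ≤ |y| → y ∈ s → x ∈ s

/-- The set of all finite suprema of elements of `A`. -/
def FinSups {X : Type*} [Lattice X] (A : Set X) : Set X :=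
  {x | ∃ a ∈ A, ∃ l : List X, (∀ b ∈ l, b ∈ A) ∧ x = l.foldr (· ⊔ ·) a}

/-- A locally solid topology: a basis at zero of solid sets. -/
def IsLocallySolid (X : Type*) [Lattice X] [AddCommGroup X] [TopologicalSpace X] : Prop :=
  ∀ U ∈ 𝓝 (0 : X), ∃ V ∈ 𝓝 (0 : X), SolidSet V ∧ V ⊆ U

/-- AM-property: finite suprema of topologically bounded sets are topologically bounded. -/
def HasAMProperty (X : Type*) [Lattice X] [AddCommGroup X] [Module ℝ X]
    [TopologicalSpace X] : Prop :=
  ∀ B : Set X, IsVonNBounded ℝ B → IsVonNBounded ℝ (FinSups B)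

/-- Levi property: bounded upward directed sets of positive elements have suprema. -/
def HasLeviProperty (X : Type*) [Lattice X] [AddCommGroup X] [Module ℝ X]
    [TopologicalSpace X] : Prop :=
  ∀ D : Set X, D.Nonempty → DirectedOn (· ≤ ·) D → (∀ x ∈ D, 0 ≤ x) →
    IsVonNBounded ℝ D → ∃ y, IsLUB D y

/-- Lebesgue property: nets decreasing to `0` converge to `0` topologically. -/
def HasLebesgueProperty (X : Type*) [Lattice X] [AddCommGroup X]
    [TopologicalSpace X] : Prop :=
  ∀ {ι : Type} [Nonempty ι] [SemilatticeSup ι] (u : ι → X),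
    Antitone u → IsGLB (Set.range u) 0 → Tendsto u atTop (𝓝 0)

/-- Order (Dedekind) completeness. -/
def OrderComplete (X : Type*) [Lattice X] : Prop :=
  ∀ A : Set X, A.Nonempty → BddAbove A → ∃ y, IsLUB A y

/-- A set is order closed if it contains suprema of its upward directed subsets. -/
def OrderClosedSet {X : Type*} [Lattice X] (s : Set X) : Prop :=
  ∀ A : Set X, A ⊆ s → DirectedOn (· ≤ ·) A → ∀ y, IsLUB A y → y ∈ s

/-- Fatou property: a basis at zero of solid order closed sets. -/
def HasFatouProperty (X : Type*) [Lattice X] [AddCommGroup X] [TopologicalSpace X] : Prop :=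
  ∀ U ∈ 𝓝 (0 : X), ∃ V ∈ 𝓝 (0 : X), SolidSet V ∧ OrderClosedSet V ∧ V ⊆ U

variable {X Y : Type*} [Lattice X] [AddCommGroup X] [Module ℝ X] [TopologicalSpace X]
  [Lattice Y] [AddCommGroup Y] [Module ℝ Y] [TopologicalSpace Y]

/-- An order bounded operator maps order bounded sets to order bounded sets. -/
def OrderBoundedOp (T : X →ₗ[ℝ] Y) : Prop :=
  ∀ A : Set X, BddBelow A → BddAbove A → BddBelow (T '' A) ∧ BddAbove (T '' A)

/-- nb-bounded: maps some zero neighborhood to a topologically bounded set. -/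
def NbBoundedOp (T : X →ₗ[ℝ] Y) : Prop :=
  ∃ U ∈ 𝓝 (0 : X), IsVonNBounded ℝ (T '' U)

/-- bb-bounded: maps topologically bounded sets to topologically bounded sets. -/
def BbBoundedOp (T : X →ₗ[ℝ] Y) : Prop :=
  ∀ B : Set X, IsVonNBounded ℝ B → IsVonNBounded ℝ (T '' B)

/-- `M` is the modulus of `S` (Riesz–Kantorovich formula). -/
def IsModulusOf (S M : X →ₗ[ℝ] Y) : Prop :=
  ∀ x : X, 0 ≤ x → IsLUB {y : Y | ∃ u : X, |u| ≤ x ∧ y = |S u|} (M x)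

/-- The order on operators: `T ≤ S` pointwise on the positive cone. -/
def OpLE (T S : X →ₗ[ℝ] Y) : Prop := ∀ x : X, 0 ≤ x → T x ≤ S x

/-! Evaluation at a coordinate is a lattice homomorphism, so each coordinate of a finite
supremum of elements of `B` is a finite supremum of coordinates of elements of `B`; and von
Neumann boundedness in a product is checked coordinatewise. -/

theorem map_foldr_sup {α β F : Type*} [Lattice α] [Lattice β] [FunLike F α β] [SupHomClass F α β]
    (f : F) (a : α) (l : List α) :
    f (l.foldr (· ⊔ ·) a) = (l.map f).foldr (· ⊔ ·) (f a) := by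
  induction l with
  | nil => rfl
  | cons b l ih => rw [List.foldr_cons, SupHomClass.map_sup, ih]; rfl

theorem image_finSups_subset {α β F : Type*} [Lattice α] [Lattice β] [FunLike F α β]
    [SupHomClass F α β] (f : F) (A : Set α) : f '' FinSups A ⊆ FinSups (f '' A) := by
  rintro _ ⟨x, ⟨a, ha, l, hl, rfl⟩, rfl⟩
  exact ⟨f a, mem_image_of_mem f ha, l.map f,
    List.forall_mem_map.2 fun b hb => mem_image_of_mem f (hl b hb), map_foldr_sup f a l⟩

theorem stmt2_general {ι : Type*} (Z : ι → Type*) [∀ i, Lattice (Z i)] [∀ i, AddCommGroup (Z i)]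
    [∀ i, Module ℝ (Z i)]
    [∀ i, TopologicalSpace (Z i)]
    (hAM : ∀ i, HasAMProperty (Z i)) :
    HasAMProperty (∀ i, Z i) := by
  intro B hB
  rw [isVonNBounded_pi_iff] at hB ⊢
  exact fun i => (hAM i _ (hB i)).subset (image_finSups_subset (Pi.evalLatticeHom i) B)

theorem stmt2 {ι : Type*} (Z : ι → Type*) [∀ i, Lattice (Z i)] [∀ i, AddCommGroup (Z i)]
    [∀ i, CovariantClass (Z i) (Z i) (· + ·) (· ≤ ·)] [∀ i, Module ℝ (Z i)]
    [∀ i, TopologicalSpace (Z i)] [∀ i, IsTopologicalAddGroup (Z i)]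
    [∀ i, ContinuousSMul ℝ (Z i)]
    (hsolid : ∀ i, IsLocallySolid (Z i)) (hAM : ∀ i, HasAMProperty (Z i)) :
    HasAMProperty (∀ i, Z i) :=
  stmt2_general Z hAM
end

section
/- Let X be an order complete locally solid vector lattice. Then X has both the AM-property and the Levi property if and only if every topologically bounded subset of X is order bounded (note every order bounded set is automatically topologically bounded in a locally solid vector lattice). -/
open Filter Topology Bornology Set

variable {X Y : Type*} [Lattice X] [AddCommGroup X] [Module ℝ X] [TopologicalSpace X]
  [Lattice Y] [AddCommGroup Y] [Module ℝ Y] [TopologicalSpace Y]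

/-!
If topologically bounded sets are order bounded, the finite suprema of a bounded set stay in an
order interval, and order intervals are topologically bounded because the topology is locally
solid; so the AM-property holds, and the Levi property is just order completeness. Conversely,
for a bounded set `C` the positive finite suprema of `C ∪ {0}` form a bounded, upward directed
set of positive elements, whose supremum (by the Levi property) is an upper bound of `C`;
applied to `-C` this also gives a lower bound.
-/

open scoped Pointwise

section FinSups

variable {L : Type*} [Lattice L]

lemma List.foldr_sup_sup (l : List L) (a b : L) :
    l.foldr (· ⊔ ·) (a ⊔ b) = l.foldr (· ⊔ ·) a ⊔ b := by
  induction l with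
  | nil => rfl
  | cons c l ih => simp only [List.foldr_cons, ih, sup_assoc]

lemma subset_finSups (A : Set L) : A ⊆ FinSups A :=
  fun a ha => ⟨a, ha, [], by simp, rfl⟩

lemma supClosed_finSups (A : Set L) : SupClosed (FinSups A) := by
  rintro _ ⟨a, ha, l, hl, rfl⟩ _ ⟨c, hc, m, hm, rfl⟩
  refine ⟨c, hc, l ++ a :: m, fun b hb => ?_, ?_⟩
  · simp only [List.mem_append, List.mem_cons] at hb
    rcases hb with hb | rfl | hb
    · exact hl b hb
    · exact ha
    · exact hm b hb
  · rw [List.foldr_append, List.foldr_cons, List.foldr_sup_sup]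

lemma finSups_eq_supClosure (A : Set L) : FinSups A = supClosure A := by
  refine (supClosure_min (subset_finSups A) (supClosed_finSups A)).antisymm' ?_
  rintro _ ⟨a, ha, l, hl, rfl⟩
  induction l with
  | nil => exact subset_supClosure ha
  | cons c l ih =>
    exact supClosed_supClosure (subset_supClosure (hl c List.mem_cons_self))
      (ih fun b hb => hl b (List.mem_cons_of_mem c hb))

end FinSups

section AMLevi

variable {Z : Type*} [Lattice Z] [AddCommGroup Z] [Module ℝ Z] [TopologicalSpace Z]
  [ContinuousSMul ℝ Z]

lemma HasAMProperty.bddAbove_of_isVonNBounded (hAM : HasAMProperty Z)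
    (hLevi : HasLeviProperty Z) {C : Set Z} (hC : IsVonNBounded ℝ C) : BddAbove C := by
  set D := supClosure (insert 0 C) ∩ Ici 0
  have h0D : (0 : Z) ∈ D := ⟨subset_supClosure (mem_insert 0 C), le_rfl⟩
  have hDdir : DirectedOn (· ≤ ·) D :=
    (supClosed_supClosure.inter (isUpperSet_Ici 0).supClosed).directedOn
  have hDb : IsVonNBounded ℝ D := by
    refine (hAM _ (hC.insert 0)).subset ?_
    rw [finSups_eq_supClosure]
    exact inter_subset_left
  obtain ⟨y, hy⟩ := hLevi D ⟨0, h0D⟩ hDdir (fun x hx => hx.2) hDb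
  refine ⟨y, fun b hb => (le_sup_left : b ≤ b ⊔ 0).trans (hy.1 ?_)⟩
  exact ⟨sup_mem_supClosure (mem_insert_of_mem 0 hb) (mem_insert 0 C), le_sup_right⟩

variable [AddLeftMono Z] [IsTopologicalAddGroup Z]

lemma HasAMProperty.bddBelow_of_isVonNBounded (hAM : HasAMProperty Z)
    (hLevi : HasLeviProperty Z) {C : Set Z} (hC : IsVonNBounded ℝ C) : BddBelow C :=
  bddAbove_neg.1 (hAM.bddAbove_of_isVonNBounded hLevi hC.neg)

end AMLevi

lemma IsLocallySolid.tendsto_zero_of_abs_le {X ι : Type*} [Lattice X] [AddCommGroup X]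
    [TopologicalSpace X] {l : Filter ι} {y z : ι → X}
    (hsolid : IsLocallySolid X) (hyz : ∀ᶠ i in l, |y i| ≤ |z i|) (hz : Tendsto z l (𝓝 0)) :
    Tendsto y l (𝓝 0) := fun U hU => mem_map.2 <| by
  obtain ⟨V, hV, hVsolid, hVU⟩ := hsolid U hU
  filter_upwards [hyz, hz hV] with i hi hzi using hVU (hVsolid _ _ hi hzi)

section OrderIntervals

variable {Z : Type*} [Lattice Z] [AddCommGroup Z] [AddLeftMono Z] [Module ℝ Z]

/- Scalar multiplication is not assumed to be monotone; positivity of `2⁻¹ • x` comes from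
`0 ≤ 2 • a → 0 ≤ a`, valid in every lattice ordered group. This is why boundedness of order
intervals is tested along the scalars `2⁻ⁿ`. -/
lemma inv_two_pow_smul_nonneg {x : Z} (hx : 0 ≤ x) (n : ℕ) : 0 ≤ ((2 : ℝ)⁻¹ ^ n) • x := by
  induction n with
  | zero => simpa using hx
  | succ n ih =>
    refine nsmul_two_semiclosed ?_
    rwa [← Nat.cast_smul_eq_nsmul ℝ, smul_smul, pow_succ', ← mul_assoc, Nat.cast_two,
      mul_inv_cancel₀ two_ne_zero, one_mul]

variable [TopologicalSpace Z] [IsTopologicalAddGroup Z] [ContinuousSMul ℝ Z]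

lemma IsLocallySolid.isVonNBounded_Icc (hsolid : IsLocallySolid Z) (l u : Z) :
    IsVonNBounded ℝ (Icc l u) := by
  set ε : ℕ → ℝ := fun n => (2 : ℝ)⁻¹ ^ n
  have hε : Tendsto ε atTop (𝓝 0) :=
    tendsto_pow_atTop_nhds_zero_of_lt_one (by norm_num) (by norm_num)
  have hεsmul (z : Z) : Tendsto (fun n => ε n • z) atTop (𝓝 0) := by
    simpa using hε.smul_const z
  refine isVonNBounded_of_smul_tendsto_zero (ε := ε) (l := atTop)
    (Eventually.of_forall fun n => by positivity) fun x hx => ?_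
  have hshift : Tendsto (fun n => ε n • (x n - l)) atTop (𝓝 0) := by
    refine hsolid.tendsto_zero_of_abs_le (Eventually.of_forall fun n => ?_) (hεsmul (u - l))
    have hle : ε n • (x n - l) ≤ ε n • (u - l) := by
      rw [← sub_nonneg, ← smul_sub, sub_sub_sub_cancel_right]
      exact inv_two_pow_smul_nonneg (sub_nonneg.2 (hx n).2) n
    exact abs_le_abs_of_nonneg (inv_two_pow_smul_nonneg (sub_nonneg.2 (hx n).1) n) hle
  have hsum := hshift.add (hεsmul l)
  rw [zero_add] at hsum
  exact hsum.congr fun n => by simp [smul_sub]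

end OrderIntervals

theorem stmt4 {Z : Type*} [Lattice Z] [AddCommGroup Z]
    [CovariantClass Z Z (· + ·) (· ≤ ·)] [Module ℝ Z]
    [TopologicalSpace Z] [IsTopologicalAddGroup Z] [ContinuousSMul ℝ Z]
    (hsolid : IsLocallySolid Z) (hoc : OrderComplete Z) :
    (HasAMProperty Z ∧ HasLeviProperty Z) ↔
      (∀ B : Set Z, IsVonNBounded ℝ B → BddBelow B ∧ BddAbove B) := by
  constructor
  · rintro ⟨hAM, hLevi⟩ B hB
    exact ⟨hAM.bddBelow_of_isVonNBounded hLevi hB, hAM.bddAbove_of_isVonNBounded hLevi hB⟩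
  · intro H
    refine ⟨fun B hB => ?_, fun D hD _ _ hDb => hoc D hD (H D hDb).2⟩
    obtain ⟨⟨l, hl⟩, ⟨u, hu⟩⟩ := H B hB
    have hIcc : SupClosed (Icc l u) := fun a ha b hb => ⟨le_sup_of_le_left ha.1, sup_le ha.2 hb.2⟩
    have hBIcc : B ⊆ Icc l u := fun b hb => ⟨hl hb, hu hb⟩
    rw [finSups_eq_supClosure]
    exact (hsolid.isVonNBounded_Icc l u).subset (supClosure_min hBIcc hIcc)
end

section
/- Let X and Y be locally solid vector lattices such that Y is order complete and has both the AM-property and the Levi property. Then every linear operator T : X → Y that maps topologically bounded sets to topologically bounded sets is order bounded. -/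
/-!
Order intervals are absorbed by solid neighbourhoods of zero, so an order bounded set `A` is
topologically bounded, and hence so is `T A`. Local solidity of `Y` makes `|T A|` bounded, the
AM-property makes the upward directed set of finite suprema of `|T A|` bounded, and the Levi
property gives it a supremum `c`; then `T A ⊆ [-c, c]`.
-/

open Filter Topology Bornology Set

variable {X Y : Type*} [Lattice X] [AddCommGroup X] [Module ℝ X] [TopologicalSpace X]
  [Lattice Y] [AddCommGroup Y] [Module ℝ Y] [TopologicalSpace Y]

section LatticeOrderedModule

variable {G : Type*} [Lattice G] [AddCommGroup G] [Module ℝ G]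

lemma abs_smul_of_monotone {c : ℝ} (hc : c ≠ 0) (h : Monotone fun x : G => c • x)
    (h' : Monotone fun x : G => c⁻¹ • x) (x : G) : |c • x| = c • |x| := by
  let e : G ≃o G :=
    Equiv.toOrderIso ⟨(c • ·), (c⁻¹ • ·), inv_smul_smul₀ hc, smul_inv_smul₀ hc⟩ h h'
  calc |c • x| = c • x ⊔ c • -x := by rw [smul_neg]; rfl
    _ = c • |x| := (e.map_sup x (-x)).symm

variable [AddLeftMono G]

/-- The ℝ-action is not assumed to respect the order; halving does, because in a lattice-ordered
group `0 ≤ 2 • a` forces `0 ≤ a`. -/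
lemma monotone_inv_two_smul : Monotone fun x : G => (2⁻¹ : ℝ) • x := by
  intro x y hxy
  refine sub_nonneg.1 (nsmul_two_semiclosed ?_)
  rwa [← Nat.cast_smul_eq_nsmul ℝ, ← smul_sub, smul_smul, Nat.cast_ofNat,
    mul_inv_cancel₀ two_ne_zero, one_smul, sub_nonneg]

lemma monotone_two_smul : Monotone fun x : G => (2 : ℝ) • x := fun _ _ h => by
  simpa only [two_smul] using add_le_add h h

lemma abs_inv_two_pow_smul_le_abs_inv_two_pow_smul {x y : G} (h : |x| ≤ |y|) (k : ℕ) :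
    |(2⁻¹ : ℝ) ^ k • x| ≤ |(2⁻¹ : ℝ) ^ k • y| := by
  have hmono : Monotone fun x : G => (2⁻¹ : ℝ) ^ k • x := by
    simpa only [smul_iterate] using monotone_inv_two_smul.iterate k
  have hmono' : Monotone fun x : G => ((2⁻¹ : ℝ) ^ k)⁻¹ • x := by
    simpa only [inv_pow, inv_inv, smul_iterate] using (monotone_two_smul (G := G)).iterate k
  rw [abs_smul_of_monotone (by positivity) hmono hmono',
    abs_smul_of_monotone (by positivity) hmono hmono']
  exact hmono h

end LatticeOrderedModule

section OrderBounded

variable {G : Type*} [Lattice G] [AddGroup G] [AddLeftMono G] [AddRightMono G]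

lemma exists_abs_le_of_bddBelow_of_bddAbove {s : Set G} (hbelow : BddBelow s)
    (habove : BddAbove s) : ∃ c, ∀ x ∈ s, |x| ≤ c := by
  obtain ⟨a, ha⟩ := hbelow
  obtain ⟨b, hb⟩ := habove
  refine ⟨|a| ⊔ |b|, fun x hx => abs_le'.2 ⟨?_, ?_⟩⟩
  · exact (hb hx).trans ((le_abs_self b).trans le_sup_right)
  · exact (neg_le_neg_iff.2 (ha hx)).trans ((neg_le_abs a).trans le_sup_left)

lemma bddBelow_and_bddAbove_of_abs_le {s : Set G} {c : G} (hc : ∀ x ∈ s, |x| ≤ c) :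
    BddBelow s ∧ BddAbove s :=
  ⟨⟨-c, fun x hx => neg_le.1 (abs_le'.1 (hc x hx)).2⟩,
    ⟨c, fun x hx => (abs_le'.1 (hc x hx)).1⟩⟩

end OrderBounded

def solidHull {E : Type*} [Lattice E] [AddGroup E] (s : Set E) : Set E :=
  {x | ∃ y ∈ s, |x| ≤ |y|}

section LocallySolid

variable {E : Type*} [Lattice E] [AddCommGroup E] [TopologicalSpace E]

lemma IsLocallySolid.tendsto_zero_of_abs_le_s5 (hE : IsLocallySolid E) {ι : Type*} {l : Filter ι}
    {f g : ι → E} (hg : Tendsto g l (𝓝 0)) (hfg : ∀ᶠ i in l, |f i| ≤ |g i|) :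
    Tendsto f l (𝓝 0) := by
  intro U hU
  obtain ⟨S, hS, hsolid, hSU⟩ := hE U hU
  show ∀ᶠ i in l, f i ∈ U
  filter_upwards [hg hS, hfg] with i hgi hfgi
  exact hSU (hsolid _ _ hfgi hgi)

variable [AddLeftMono E] [Module ℝ E] [ContinuousSMul ℝ E]

lemma IsLocallySolid.isVonNBounded_solidHull (hE : IsLocallySolid E) {s : Set E}
    (hs : IsVonNBounded ℝ s) : IsVonNBounded ℝ (solidHull s) := by
  have hε : Tendsto (fun k : ℕ => (2⁻¹ : ℝ) ^ k) atTop (𝓝[≠] 0) :=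
    tendsto_nhdsWithin_iff.2 ⟨tendsto_pow_atTop_nhds_zero_of_lt_one (by norm_num) (by norm_num),
      Eventually.of_forall fun k => pow_ne_zero k (by norm_num)⟩
  rw [isVonNBounded_iff_smul_tendsto_zero hε] at hs ⊢
  intro x hx
  choose y hys hxy using hx
  exact hE.tendsto_zero_of_abs_le_s5 (hs y hys) (Eventually.of_forall fun k =>
    abs_inv_two_pow_smul_le_abs_inv_two_pow_smul (hxy k) k)

lemma IsLocallySolid.isVonNBounded_of_bddBelow_of_bddAbove (hE : IsLocallySolid E) {s : Set E}
    (hbelow : BddBelow s) (habove : BddAbove s) : IsVonNBounded ℝ s := by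
  obtain ⟨c, hc⟩ := exists_abs_le_of_bddBelow_of_bddAbove hbelow habove
  exact (hE.isVonNBounded_solidHull (isVonNBounded_singleton c)).subset
    fun x hx => show ∃ y ∈ ({c} : Set E), |x| ≤ |y| from ⟨c, rfl, (hc x hx).trans (le_abs_self c)⟩

end LocallySolid

section FinSups

variable {E : Type*} [Lattice E]

lemma subset_finSups_s5 (s : Set E) : s ⊆ FinSups s :=
  fun a ha => ⟨a, ha, [], by simp, rfl⟩

lemma exists_le_of_mem_finSups {s : Set E} {x : E} (hx : x ∈ FinSups s) : ∃ a ∈ s, a ≤ x := by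
  obtain ⟨a, ha, l, -, rfl⟩ := hx
  refine ⟨a, ha, ?_⟩
  induction l with
  | nil => exact le_rfl
  | cons b l ih => exact ih.trans le_sup_right

lemma foldr_sup_append_cons (a₁ a₂ : E) (l₁ l₂ : List E) :
    (l₁ ++ a₁ :: l₂).foldr (· ⊔ ·) a₂ = l₁.foldr (· ⊔ ·) a₁ ⊔ l₂.foldr (· ⊔ ·) a₂ := by
  induction l₁ with
  | nil => rfl
  | cons x l ih => simp only [List.cons_append, List.foldr_cons, ih, sup_assoc]

lemma sup_mem_finSups {s : Set E} {x y : E} (hx : x ∈ FinSups s) (hy : y ∈ FinSups s) :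
    x ⊔ y ∈ FinSups s := by
  obtain ⟨a, ha, l, hl, rfl⟩ := hx
  obtain ⟨b, hb, m, hm, rfl⟩ := hy
  refine ⟨b, hb, l ++ a :: m, fun c hc => ?_, (foldr_sup_append_cons a b l m).symm⟩
  rcases List.mem_append.1 hc with hc | hc | ⟨_, hc⟩
  · exact hl c hc
  · exact ha
  · exact hm c hc

lemma directedOn_finSups (s : Set E) : DirectedOn (· ≤ ·) (FinSups s) :=
  fun x hx y hy => ⟨x ⊔ y, sup_mem_finSups hx hy, le_sup_left, le_sup_right⟩

end FinSups

lemma exists_abs_le_of_isVonNBounded {E : Type*} [Lattice E] [AddCommGroup E] [AddLeftMono E]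
    [Module ℝ E] [TopologicalSpace E] [ContinuousSMul ℝ E] (hE : IsLocallySolid E)
    (hAM : HasAMProperty E) (hLevi : HasLeviProperty E) {s : Set E} (hs : IsVonNBounded ℝ s) :
    ∃ c, ∀ y ∈ s, |y| ≤ c := by
  rcases s.eq_empty_or_nonempty with rfl | ⟨y₀, hy₀⟩
  · exact ⟨0, by simp⟩
  have habs : (|·|) '' s ⊆ solidHull s := by
    rintro _ ⟨y, hy, rfl⟩
    exact ⟨y, hy, (abs_abs y).le⟩
  have hbdd : IsVonNBounded ℝ (FinSups ((|·|) '' s)) :=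
    hAM _ ((hE.isVonNBounded_solidHull hs).subset habs)
  have hnonneg : ∀ x ∈ FinSups ((|·|) '' s), 0 ≤ x := fun x hx => by
    obtain ⟨_, ⟨y, -, rfl⟩, hyx⟩ := exists_le_of_mem_finSups hx
    exact (abs_nonneg y).trans hyx
  obtain ⟨c, hc⟩ := hLevi _ ⟨_, subset_finSups_s5 _ (mem_image_of_mem _ hy₀)⟩
    (directedOn_finSups _) hnonneg hbdd
  exact ⟨c, fun y hy => hc.1 (subset_finSups_s5 _ (mem_image_of_mem _ hy))⟩

section Operators

variable {V W : Type*} [Lattice V] [AddCommGroup V]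
  [CovariantClass V V (· + ·) (· ≤ ·)] [Module ℝ V]
  [TopologicalSpace V] [IsTopologicalAddGroup V] [ContinuousSMul ℝ V]
  [Lattice W] [AddCommGroup W]
  [CovariantClass W W (· + ·) (· ≤ ·)] [Module ℝ W]
  [TopologicalSpace W] [IsTopologicalAddGroup W] [ContinuousSMul ℝ W]

theorem stmt5_general (hV : IsLocallySolid V) (hW : IsLocallySolid W)
    (hAM : HasAMProperty W) (hLevi : HasLeviProperty W)
    (T : V →ₗ[ℝ] W) (hT : BbBoundedOp T) : OrderBoundedOp T := by
  intro A hbelow habove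
  have hA : IsVonNBounded ℝ A := hV.isVonNBounded_of_bddBelow_of_bddAbove hbelow habove
  obtain ⟨c, hc⟩ := exists_abs_le_of_isVonNBounded hW hAM hLevi (hT A hA)
  exact bddBelow_and_bddAbove_of_abs_le hc

theorem stmt5 (hV : IsLocallySolid V) (hW : IsLocallySolid W)
    (hoc : OrderComplete W) (hAM : HasAMProperty W) (hLevi : HasLeviProperty W)
    (T : V →ₗ[ℝ] W) (hT : BbBoundedOp T) : OrderBoundedOp T :=
  stmt5_general hV hW hAM hLevi T hT

end Operators
end

section
/- Let X and Y be locally solid vector lattices with Y order complete and having the Fatou property. If 0 ≤ T ≤ S are linear operators from X to Y and S is continuous (respectively nb-bounded, respectively bb-bounded), then T is continuous (respectively nb-bounded, respectively bb-bounded). -/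
/-!
Positivity of `T` and `S - T` gives `|T x| ≤ T |x| ≤ S |x|`, so the image under `T` of any set
`N` is dominated in modulus by the image under `S` of `{|x| | x ∈ N}`. In a locally solid space
a set dominated in modulus by a small (resp. bounded) set is small (resp. bounded), because solid
zero neighbourhoods can be chosen inside any given one. Real scalars are not assumed to respect
the order, so absorption is carried out with the scalars `2 ^ k`, which act as iterated doublings
and hence keep solid sets solid.
-/

open Filter Topology Bornology Set

variable {X Y : Type*} [Lattice X] [AddCommGroup X] [Module ℝ X] [TopologicalSpace X]
  [Lattice Y] [AddCommGroup Y] [Module ℝ Y] [TopologicalSpace Y]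

open scoped Pointwise

section LatticeOrderedGroup

variable {E : Type*} [Lattice E] [AddCommGroup E] [AddLeftMono E]

theorem abs_two_nsmul (a : E) : |2 • a| = 2 • |a| := by
  -- `|a| + |a| = (a + a) ⊔ 0 ⊔ -(a + a)`, and the `0` is absorbed since `0 ≤ |a + a|`
  have h : (0 : E) ≤ |a + a| := abs_nonneg (a + a)
  rw [abs] at h
  simp only [two_nsmul, abs, add_sup, sup_add, add_neg_cancel, neg_add_cancel, ← neg_add]
  rw [sup_assoc, ← sup_assoc 0, sup_idem, sup_comm 0, ← sup_assoc, sup_of_le_left h]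

theorem le_of_two_nsmul_le_two_nsmul {a b : E} (h : 2 • a ≤ 2 • b) : a ≤ b :=
  sub_nonneg.1 <| nsmul_two_semiclosed <| by rwa [nsmul_sub, sub_nonneg]

theorem SolidSet.abs_mem {s : Set E} (hs : SolidSet s) {x : E} (hx : x ∈ s) : |x| ∈ s :=
  hs _ x (abs_abs x).le hx

end LatticeOrderedGroup

section LatticeOrderedModule

variable {E : Type*} [Lattice E] [AddCommGroup E] [AddLeftMono E] [Module ℝ E]

theorem SolidSet.two_smul {s : Set E} (hs : SolidSet s) : SolidSet ((2 : ℝ) • s) := by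
  rintro x _ hxy ⟨v, hv, rfl⟩
  refine ⟨(2 : ℝ)⁻¹ • x, hs _ v (le_of_two_nsmul_le_two_nsmul ?_) hv, smul_inv_smul₀ two_ne_zero x⟩
  rwa [← abs_two_nsmul, ← abs_two_nsmul, ← ofNat_smul_eq_nsmul ℝ, ← ofNat_smul_eq_nsmul ℝ,
    smul_inv_smul₀ two_ne_zero]

theorem SolidSet.two_pow_smul {s : Set E} (hs : SolidSet s) (k : ℕ) :
    SolidSet (((2 : ℝ) ^ k) • s) := by
  induction k with
  | zero => simpa using hs
  | succ k ih => simpa only [pow_succ', mul_smul] using ih.two_smul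

theorem Bornology.IsVonNBounded.of_forall_abs_le [TopologicalSpace E] [ContinuousSMul ℝ E]
    (hE : IsLocallySolid E) {B B' : Set E} (hB : IsVonNBounded ℝ B)
    (h : ∀ y ∈ B', ∃ b ∈ B, |y| ≤ |b|) : IsVonNBounded ℝ B' := by
  intro U hU
  obtain ⟨N, hN, hNsolid, hNU⟩ := hE _ (balancedCore_mem_nhds_zero (𝕜 := ℝ) hU)
  obtain ⟨r, hr⟩ := absorbs_iff_norm.1 (hB hN)
  obtain ⟨k, hk⟩ := pow_unbounded_of_one_lt r one_lt_two
  have hB'N : B' ⊆ (2 ^ k : ℝ) • N := fun y hy => by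
    obtain ⟨b, hb, hyb⟩ := h y hy
    exact hNsolid.two_pow_smul k y b hyb (hr _ (by simpa using hk.le) hb)
  refine absorbs_iff_norm.2 ⟨2 ^ k, fun c hc => hB'N.trans ?_⟩
  calc (2 ^ k : ℝ) • N ⊆ (2 ^ k : ℝ) • balancedCore ℝ U := smul_set_mono hNU
    _ ⊆ c • balancedCore ℝ U := (balancedCore_balanced U).smul_mono (by simpa using hc)
    _ ⊆ c • U := smul_set_mono (balancedCore_subset U)

end LatticeOrderedModule

theorem abs_map_le_map_abs {E G F : Type*} [Lattice E] [AddCommGroup E] [AddLeftMono E]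
    [Lattice G] [AddCommGroup G] [AddLeftMono G] [FunLike F E G] [AddMonoidHomClass F E G]
    (T : F) (hT : ∀ x, 0 ≤ x → 0 ≤ T x) (x : E) : |T x| ≤ T |x| := by
  have h₁ := hT _ (posPart_nonneg x)
  have h₂ := hT _ (negPart_nonneg x)
  have hx : T x = T x⁺ - T x⁻ := by rw [← map_sub, posPart_sub_negPart]
  have habs : T |x| = T x⁺ + T x⁻ := by rw [← map_add, posPart_add_negPart]
  rw [hx, habs]
  refine abs_le'.2 ⟨(sub_le_self _ h₂).trans (le_add_of_nonneg_right h₂), ?_⟩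
  rw [neg_sub]
  exact (sub_le_self _ h₁).trans (le_add_of_nonneg_left h₁)

section DominatedOperators

variable {E F : Type*} [Lattice E] [AddCommGroup E] [AddLeftMono E] [Module ℝ E]
  [TopologicalSpace E] [Lattice F] [AddCommGroup F] [Module ℝ F] [TopologicalSpace F]
  {T S : E →ₗ[ℝ] F}

theorem LinearMap.continuous_of_abs_le [IsTopologicalAddGroup E] [ContinuousAdd F]
    (hE : IsLocallySolid E) (hF : IsLocallySolid F) (hdom : ∀ x, |T x| ≤ |S (|x|)|)
    (hS : Continuous S) : Continuous T := by
  refine continuous_of_continuousAt_zero T ?_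
  rw [ContinuousAt, map_zero]
  intro U hU
  obtain ⟨U', hU', hU'solid, hU'U⟩ := hF U hU
  obtain ⟨N, hN, hNsolid, hNU'⟩ :=
    hE _ (hS.continuousAt.preimage_mem_nhds (by rwa [map_zero]) : S ⁻¹' U' ∈ 𝓝 0)
  exact mem_map.2 <| mem_of_superset hN fun x hx =>
    hU'U (hU'solid _ _ (hdom x) (hNU' (hNsolid.abs_mem hx)))

theorem NbBoundedOp.of_abs_le [AddLeftMono F] [ContinuousSMul ℝ F] (hE : IsLocallySolid E)
    (hF : IsLocallySolid F) (hdom : ∀ x, |T x| ≤ |S (|x|)|) (hS : NbBoundedOp S) :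
    NbBoundedOp T := by
  obtain ⟨U, hU, hSU⟩ := hS
  obtain ⟨N, hN, hNsolid, hNU⟩ := hE U hU
  refine ⟨N, hN, hSU.of_forall_abs_le hF ?_⟩
  rintro _ ⟨x, hx, rfl⟩
  exact ⟨S |x|, mem_image_of_mem S (hNU (hNsolid.abs_mem hx)), hdom x⟩

theorem BbBoundedOp.of_abs_le [AddLeftMono F] [ContinuousSMul ℝ E] [ContinuousSMul ℝ F]
    (hE : IsLocallySolid E) (hF : IsLocallySolid F) (hdom : ∀ x, |T x| ≤ |S (|x|)|)
    (hS : BbBoundedOp S) : BbBoundedOp T := by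
  intro B hB
  have habsB : IsVonNBounded ℝ ((|·|) '' B) := hB.of_forall_abs_le hE <| by
    rintro _ ⟨x, hx, rfl⟩
    exact ⟨x, hx, (abs_abs x).le⟩
  refine (hS _ habsB).of_forall_abs_le hF ?_
  rintro _ ⟨x, hx, rfl⟩
  exact ⟨S |x|, mem_image_of_mem S (mem_image_of_mem _ hx), hdom x⟩

end DominatedOperators

section Operators

variable {V W : Type*} [Lattice V] [AddCommGroup V]
  [CovariantClass V V (· + ·) (· ≤ ·)] [Module ℝ V]
  [TopologicalSpace V] [IsTopologicalAddGroup V] [ContinuousSMul ℝ V]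
  [Lattice W] [AddCommGroup W]
  [CovariantClass W W (· + ·) (· ≤ ·)] [Module ℝ W]
  [TopologicalSpace W] [IsTopologicalAddGroup W] [ContinuousSMul ℝ W]

theorem stmt10_general (hV : IsLocallySolid V) (hW : IsLocallySolid W)
    (T S : V →ₗ[ℝ] W) (hpos : ∀ x : V, 0 ≤ x → 0 ≤ T x ∧ T x ≤ S x) :
    (Continuous S → Continuous T) ∧ (NbBoundedOp S → NbBoundedOp T) ∧
      (BbBoundedOp S → BbBoundedOp T) := by
  have hdom : ∀ x, |T x| ≤ |S (|x|)| := fun x => by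
    have hTS := hpos |x| (abs_nonneg x)
    calc |T x| ≤ T |x| := abs_map_le_map_abs T (fun y hy => (hpos y hy).1) x
      _ ≤ S |x| := hTS.2
      _ = |S (|x|)| := (abs_of_nonneg (hTS.1.trans hTS.2)).symm
  exact ⟨LinearMap.continuous_of_abs_le hV hW hdom, NbBoundedOp.of_abs_le hV hW hdom,
    BbBoundedOp.of_abs_le hV hW hdom⟩

theorem stmt10 (hV : IsLocallySolid V) (hW : IsLocallySolid W)
    (hoc : OrderComplete W) (hFatou : HasFatouProperty W)
    (T S : V →ₗ[ℝ] W) (hpos : ∀ x : V, 0 ≤ x → 0 ≤ T x ∧ T x ≤ S x) :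
    (Continuous S → Continuous T) ∧ (NbBoundedOp S → NbBoundedOp T) ∧
      (BbBoundedOp S → BbBoundedOp T) :=
  stmt10_general hV hW T S hpos

end Operators
end

section
/- The identity operator on ℝ^ℕ (with product topology and pointwise order) is order bounded and is the supremum of the increasing sequence of nb-bounded finite-rank projections P_n (where P_n keeps the first n coordinates and sets the rest to 0), yet the identity is not nb-bounded; hence the nb-bounded order bounded operators do not form a band in the order bounded operators. -/
open Filter Topology Bornology Set

variable {X Y : Type*} [Lattice X] [AddCommGroup X] [Module ℝ X] [TopologicalSpace X]
  [Lattice Y] [AddCommGroup Y] [Module ℝ Y] [TopologicalSpace Y]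

section Operators

variable {V W : Type*} [Lattice V] [AddCommGroup V]
  [CovariantClass V V (· + ·) (· ≤ ·)] [Module ℝ V]
  [TopologicalSpace V] [IsTopologicalAddGroup V] [ContinuousSMul ℝ V]
  [Lattice W] [AddCommGroup W]
  [CovariantClass W W (· + ·) (· ≤ ·)] [Module ℝ W]
  [TopologicalSpace W] [IsTopologicalAddGroup W] [ContinuousSMul ℝ W]

/-- `T0` is the least upper bound of the set `𝒯` of operators within the class `P`,
for the operator order. -/
def OpIsLUBWithin (P : (V →ₗ[ℝ] W) → Prop) (𝒯 : Set (V →ₗ[ℝ] W)) (T0 : V →ₗ[ℝ] W) : Prop :=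
  P T0 ∧ (∀ T ∈ 𝒯, OpLE T T0) ∧ ∀ T1, P T1 → (∀ T ∈ 𝒯, OpLE T T1) → OpLE T0 T1

/-- The net of operators decreases to `0` within the class `P`. -/
def OpDownToZero (P : (V →ₗ[ℝ] W) → Prop) {ι : Type} [Preorder ι]
    (T : ι → V →ₗ[ℝ] W) : Prop :=
  (∀ i j, i ≤ j → OpLE (T j) (T i)) ∧ (∀ i, OpLE 0 (T i)) ∧
    ∀ S, P S → (∀ i, OpLE S (T i)) → OpLE S (0 : V →ₗ[ℝ] W)

end Operators

/-- The projection keeping the first `n` coordinates of a real sequence. -/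
def seqProj (n : ℕ) : (ℕ → ℝ) →ₗ[ℝ] (ℕ → ℝ) where
  toFun x := fun i => if i < n then x i else 0
  map_add' x y := by funext i; by_cases h : i < n <;> simp [h]
  map_smul' c x := by funext i; by_cases h : i < n <;> simp [h]


/-! A zero neighbourhood of `ℝ^ℕ` restricts only finitely many coordinates, so it contains a
whole coordinate axis and is unbounded; hence the identity is not nb-bounded. Each `P_n` sees
only finitely many coordinates and is nb-bounded, and on positive vectors `P_n x ≤ x` with
equality in coordinate `i` once `n > i`, so the identity is the least upper bound of the `P_n`. -/

section OrderBounded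

variable {X Y : Type*} [Lattice X] [AddCommGroup X] [Module ℝ X]
  [Lattice Y] [AddCommGroup Y] [Module ℝ Y]

theorem orderBoundedOp_of_monotone {T : X →ₗ[ℝ] Y} (hT : Monotone T) : OrderBoundedOp T :=
  fun _ hbelow habove => ⟨hT.map_bddBelow hbelow, hT.map_bddAbove habove⟩

theorem orderBoundedOp_id : OrderBoundedOp (LinearMap.id : X →ₗ[ℝ] X) :=
  orderBoundedOp_of_monotone monotone_id

end OrderBounded

section ProductTopology

variable {ι : Type*} [Infinite ι]

theorem exists_forall_update_mem_of_mem_nhds [DecidableEq ι] {E : ι → Type*}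
    [∀ i, TopologicalSpace (E i)] {x : ∀ i, E i} {U : Set (∀ i, E i)} (hU : U ∈ 𝓝 x) :
    ∃ N, ∀ c : E N, Function.update x N c ∈ U := by
  rw [nhds_pi, Filter.mem_pi] at hU
  obtain ⟨I, hI, t, ht, hsub⟩ := hU
  obtain ⟨N, hN⟩ := hI.infinite_compl.nonempty
  refine ⟨N, fun c => hsub fun i hi => ?_⟩
  rw [Function.update_of_ne (ne_of_mem_of_not_mem hi hN)]
  exact mem_of_mem_nhds (ht i)

theorem not_isVonNBounded_of_mem_nhds {𝕜 E : Type*} [NontriviallyNormedField 𝕜]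
    [NormedAddCommGroup E] [NormedSpace 𝕜 E] [Nontrivial E] {x : ι → E} {U : Set (ι → E)}
    (hU : U ∈ 𝓝 x) : ¬ IsVonNBounded 𝕜 U := by
  classical
  intro hbdd
  obtain ⟨N, hline⟩ := exists_forall_update_mem_of_mem_nhds hU
  have hcoord : Function.eval N '' U = univ :=
    eq_univ_of_forall fun c => ⟨_, hline c, Function.update_self N c x⟩
  have := (NormedSpace.isVonNBounded_iff 𝕜).mp (isVonNBounded_pi_iff.mp hbdd N)
  exact NormedSpace.unbounded_univ 𝕜 E (hcoord ▸ this)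

end ProductTopology

theorem not_nbBoundedOp_id_of_infinite {ι : Type*} [Infinite ι] :
    ¬ NbBoundedOp (LinearMap.id : (ι → ℝ) →ₗ[ℝ] (ι → ℝ)) := by
  rintro ⟨U, hU, hbdd⟩
  rw [LinearMap.id_coe, image_id] at hbdd
  exact not_isVonNBounded_of_mem_nhds hU hbdd

theorem seqProj_apply (n : ℕ) (x : ℕ → ℝ) (i : ℕ) :
    seqProj n x i = if i < n then x i else 0 := rfl

theorem seqProj_monotone (n : ℕ) : Monotone (seqProj n) := fun x y hxy i => by
  simp only [seqProj_apply]
  split_ifs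
  exacts [hxy i, le_rfl]

theorem orderBoundedOp_seqProj (n : ℕ) : OrderBoundedOp (seqProj n) :=
  orderBoundedOp_of_monotone (seqProj_monotone n)

theorem nbBoundedOp_seqProj (n : ℕ) : NbBoundedOp (seqProj n) := by
  refine ⟨(Iio n).pi fun _ => Icc (-1 : ℝ) 1,
    set_pi_mem_nhds (finite_Iio n) fun _ _ => Icc_mem_nhds (by norm_num) (by norm_num), ?_⟩
  refine isVonNBounded_pi_iff.mpr fun i => (NormedSpace.isVonNBounded_iff ℝ).mpr ?_
  refine (Metric.isBounded_Icc (-1 : ℝ) 1).subset ?_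
  rintro _ ⟨_, ⟨x, hx, rfl⟩, rfl⟩
  simp only [Function.eval, seqProj_apply]
  split_ifs with hi
  exacts [hx i hi, ⟨by norm_num, by norm_num⟩]

theorem opLE_seqProj_of_le {m n : ℕ} (hmn : m ≤ n) : OpLE (seqProj m) (seqProj n) :=
  fun x hx i => by
    simp only [seqProj_apply]
    split_ifs with hm hn hn
    exacts [le_rfl, absurd (hm.trans_le hmn) hn, hx i, le_rfl]

theorem opLE_seqProj_id (n : ℕ) : OpLE (seqProj n) LinearMap.id := fun x hx i => by
  simp only [seqProj_apply, LinearMap.id_coe, id_eq]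
  split_ifs
  exacts [le_rfl, hx i]

theorem opLE_id_of_forall_opLE_seqProj {T : (ℕ → ℝ) →ₗ[ℝ] (ℕ → ℝ)}
    (hT : ∀ n, OpLE (seqProj n) T) : OpLE LinearMap.id T := fun x hx i => by
  simpa [seqProj_apply] using hT (i + 1) x hx i

theorem opIsLUBWithin_seqProj_id :
    OpIsLUBWithin OrderBoundedOp {T | ∃ n, T = seqProj n} LinearMap.id := by
  refine ⟨orderBoundedOp_id, ?_, fun T _ hT => opLE_id_of_forall_opLE_seqProj ?_⟩
  · rintro _ ⟨n, rfl⟩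
    exact opLE_seqProj_id n
  · exact fun n => hT _ ⟨n, rfl⟩

/-- on ℝ^ℕ the identity is order bounded and is the supremum (among order
bounded operators) of the increasing sequence of nb-bounded projections, but is not
nb-bounded; hence the nb-bounded order bounded operators do not form a band. -/
theorem stmt18 :
    OrderBoundedOp (LinearMap.id : (ℕ → ℝ) →ₗ[ℝ] (ℕ → ℝ)) ∧
    (∀ n, NbBoundedOp (seqProj n) ∧ OrderBoundedOp (seqProj n)) ∧
    (∀ m n, m ≤ n → OpLE (seqProj m) (seqProj n)) ∧
    OpIsLUBWithin OrderBoundedOp {T | ∃ n, T = seqProj n} LinearMap.id ∧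
    ¬ NbBoundedOp (LinearMap.id : (ℕ → ℝ) →ₗ[ℝ] (ℕ → ℝ)) ∧
    ¬ (∀ (𝒯 : Set ((ℕ → ℝ) →ₗ[ℝ] (ℕ → ℝ))) (T0 : (ℕ → ℝ) →ₗ[ℝ] (ℕ → ℝ)),
        (∀ T ∈ 𝒯, OrderBoundedOp T ∧ NbBoundedOp T) →
        OpIsLUBWithin OrderBoundedOp 𝒯 T0 → NbBoundedOp T0) := by
  refine ⟨orderBoundedOp_id, fun n => ⟨nbBoundedOp_seqProj n, orderBoundedOp_seqProj n⟩,
    fun _ _ => opLE_seqProj_of_le, opIsLUBWithin_seqProj_id, not_nbBoundedOp_id_of_infinite,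
    fun hband => not_nbBoundedOp_id_of_infinite (hband _ _ ?_ opIsLUBWithin_seqProj_id)⟩
  rintro _ ⟨n, rfl⟩
  exact ⟨orderBoundedOp_seqProj n, nbBoundedOp_seqProj n⟩
end

section
/- The space ℓ∞ with its absolute weak topology |σ|(ℓ∞, ℓ₁) and pointwise ordering has the AM-property and the Levi property, and the identity map from (ℓ∞, |σ|(ℓ∞,ℓ₁)) to (ℓ∞, norm topology) is order bounded but not continuous. -/
open Filter Topology Bornology Set

variable {X Y : Type*} [Lattice X] [AddCommGroup X] [Module ℝ X] [TopologicalSpace X]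
  [Lattice Y] [AddCommGroup Y] [Module ℝ Y] [TopologicalSpace Y]

/-- The absolute-weak seminorm on ℓ∞ (realized as bounded functions BoundedContinuousFunction ℕ ℝ) induced by
an element of ℓ¹. -/
noncomputable def awSeminorm (f : lp (fun _ : ℕ => ℝ) 1) (x : BoundedContinuousFunction ℕ ℝ) : ℝ :=
  ∑' n, |f n| * |x n|

/-- The absolute weak topology |σ|(ℓ∞, ℓ₁): the topology generated by the balls of the
seminorms `awSeminorm f`, `f ∈ ℓ₁`. -/
noncomputable def awTopology : TopologicalSpace (BoundedContinuousFunction ℕ ℝ) :=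
  TopologicalSpace.generateFrom
    {s | ∃ (f : lp (fun _ : ℕ => ℝ) 1) (c : BoundedContinuousFunction ℕ ℝ) (ε : ℝ), 0 < ε ∧
      s = {x | awSeminorm f (x - c) < ε}}

/-!
A subset of `ℓ∞` is `|σ|(ℓ∞, ℓ¹)`-bounded iff it is norm bounded: each seminorm `p_f` is dominated
by `‖f‖₁ ‖x‖`, and conversely on an absolutely weakly bounded set the functionals
`f ↦ ∑ f n * x n` on the Banach space `ℓ¹` are pointwise bounded, hence uniformly bounded by
Banach–Steinhaus; evaluating them at the unit vectors of `ℓ¹` bounds the coordinates. Norm balls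
of `ℓ∞` are closed under `⊔`, and norm bounded sets have coordinatewise suprema, which gives the AM
and Levi properties. The unit vectors `eₙ` of `ℓ∞` tend to `0` absolutely weakly, since
`p_f(eₙ) = |f n| → 0`, but all have norm `1`, so the identity is not continuous.
-/

open scoped BoundedContinuousFunction

local notation "ℓ¹" => lp (fun _ : ℕ => ℝ) 1

namespace Seminorm

variable {𝕜 E : Type*} [NontriviallyNormedField 𝕜] [AddCommGroup E] [Module 𝕜 E]
  [TopologicalSpace E]

theorem bddAbove_image_of_isVonNBounded {p : Seminorm 𝕜 E} (hp : p.ball 0 1 ∈ 𝓝 (0 : E))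
    {s : Set E} (hs : IsVonNBounded 𝕜 s) : BddAbove (p '' s) := by
  obtain ⟨ρ, hρ, hρs⟩ := (hs hp).exists_pos
  obtain ⟨a, ha⟩ := NormedField.exists_lt_norm 𝕜 ρ
  have hsub := hρs a ha.le
  rw [p.smul_ball_zero (norm_pos_iff.1 (hρ.trans ha)), mul_one] at hsub
  exact ⟨‖a‖, forall_mem_image.2 fun x hx => (p.mem_ball_zero.1 (hsub hx)).le⟩

end Seminorm

theorem SupClosed.finSups_subset {α : Type*} [Lattice α] {A s : Set α} (hs : SupClosed s)
    (hA : A ⊆ s) : FinSups A ⊆ s := by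
  rintro _ ⟨a, ha, l, hl, rfl⟩
  induction l with
  | nil => exact hA ha
  | cons b l ih =>
    exact hs (hA (hl b (List.mem_cons_self ..))) (ih fun c hc => hl c (List.mem_cons_of_mem _ hc))

namespace BoundedContinuousFunction

variable {α : Type*} [TopologicalSpace α]

theorem supClosed_closedBall_zero (r : ℝ) : SupClosed (Metric.closedBall (0 : α →ᵇ ℝ) r) := by
  intro x hx y hy
  rw [mem_closedBall_zero_iff] at hx hy ⊢
  have hr : 0 ≤ r := (norm_nonneg x).trans hx
  refine (norm_le hr).2 fun a => ?_
  rw [coe_sup, Pi.sup_apply, Real.norm_eq_abs]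
  exact (abs_max_le_max_abs_abs).trans
    (max_le ((norm_coe_le_norm x a).trans hx) ((norm_coe_le_norm y a).trans hy))

theorem exists_isLUB_of_isBounded [DiscreteTopology α] {D : Set (α →ᵇ ℝ)} (hne : D.Nonempty)
    (hD : IsBounded D) : ∃ y, IsLUB D y := by
  obtain ⟨r, hr⟩ := isBounded_iff_forall_norm_le.1 hD
  have hbound : ∀ x ∈ D, ∀ a, |x a| ≤ r := fun x hx a =>
    (norm_coe_le_norm x a).trans (hr x hx)
  have hbdd : ∀ a, BddAbove ((fun x : α →ᵇ ℝ => x a) '' D) := fun a =>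
    ⟨r, forall_mem_image.2 fun x hx => (abs_le.1 (hbound x hx a)).2⟩
  have hne' : ∀ a, ((fun x : α →ᵇ ℝ => x a) '' D).Nonempty := fun a => hne.image _
  set g : α → ℝ := fun a => sSup ((fun x : α →ᵇ ℝ => x a) '' D)
  have hg : ∀ a, |g a| ≤ r := by
    intro a
    obtain ⟨x, hx⟩ := hne
    refine abs_le.2 ⟨(abs_le.1 (hbound x hx a)).1.trans (le_csSup (hbdd a) ⟨x, hx, rfl⟩), ?_⟩
    exact csSup_le (hne' a) (forall_mem_image.2 fun x hx => (abs_le.1 (hbound x hx a)).2)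
  refine ⟨mkOfDiscrete g (2 * r) fun a b => ?_, fun x hx a => ?_, fun z hz a => ?_⟩
  · rw [Real.dist_eq]
    linarith [abs_sub (g a) (g b), hg a, hg b]
  · exact le_csSup (hbdd a) ⟨x, hx, rfl⟩
  · exact csSup_le (hne' a) (forall_mem_image.2 fun x hx => hz hx a)

end BoundedContinuousFunction

theorem summable_abs_of_lpOne (f : ℓ¹) : Summable fun n => |f n| := by
  simpa only [ENNReal.toReal_one, Real.rpow_one, Real.norm_eq_abs] using
    (lp.memℓp f).summable (p := 1) one_pos

theorem awSeminorm_summable (f : ℓ¹) (x : ℕ →ᵇ ℝ) : Summable fun n => |f n| * |x n| :=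
  .of_nonneg_of_le (fun n => by positivity)
    (fun n => mul_le_mul_of_nonneg_left (x.norm_coe_le_norm n) (abs_nonneg _))
    ((summable_abs_of_lpOne f).mul_right ‖x‖)

theorem awSeminorm_le_norm_mul_norm (f : ℓ¹) (x : ℕ →ᵇ ℝ) :
    awSeminorm f x ≤ ‖f‖ * ‖x‖ := by
  simp only [lp.norm_eq_tsum_rpow (p := 1) one_pos, ENNReal.toReal_one, Real.rpow_one, div_one,
    Real.norm_eq_abs, awSeminorm, ← tsum_mul_right]
  exact (awSeminorm_summable f x).tsum_le_tsum
    (fun n => mul_le_mul_of_nonneg_left (x.norm_coe_le_norm n) (abs_nonneg _))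
    ((summable_abs_of_lpOne f).mul_right _)

noncomputable def awSeminorm.seminorm (f : ℓ¹) : Seminorm ℝ (ℕ →ᵇ ℝ) :=
  .of (awSeminorm f)
    (fun x y => by
      rw [awSeminorm, awSeminorm, awSeminorm,
        ← (awSeminorm_summable f x).tsum_add (awSeminorm_summable f y)]
      refine (awSeminorm_summable f _).tsum_le_tsum (fun n => ?_)
        ((awSeminorm_summable f x).add (awSeminorm_summable f y))
      rw [← mul_add]
      exact mul_le_mul_of_nonneg_left (abs_add_le _ _) (abs_nonneg _))
    (fun c x => by
      simp only [awSeminorm, BoundedContinuousFunction.coe_smul, smul_eq_mul,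
        abs_mul, Real.norm_eq_abs, ← tsum_mul_left]
      exact tsum_congr fun n => by ring)

@[simp]
theorem awSeminorm.coe_seminorm (f : ℓ¹) :
    ⇑(awSeminorm.seminorm f) = awSeminorm f := rfl

theorem awSeminorm.continuous (f : ℓ¹) : Continuous (awSeminorm f) := by
  refine (LipschitzWith.of_dist_le_mul (K := ‖f‖₊) fun x y => ?_).continuous
  rw [Real.dist_eq, dist_eq_norm, coe_nnnorm, ← awSeminorm.coe_seminorm]
  exact (abs_sub_map_le_sub (awSeminorm.seminorm f) x y).trans (awSeminorm_le_norm_mul_norm f _)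

theorem topologicalSpace_le_awTopology :
    (inferInstance : TopologicalSpace (ℕ →ᵇ ℝ)) ≤ awTopology := by
  refine le_generateFrom ?_
  rintro _ ⟨f, c, ε, -, rfl⟩
  exact isOpen_lt ((awSeminorm.continuous f).comp (continuous_id.sub continuous_const))
    continuous_const

theorem awSeminorm.ball_mem_nhds (f : ℓ¹) {ε : ℝ} (hε : 0 < ε) :
    (awSeminorm.seminorm f).ball 0 ε ∈ @nhds _ awTopology 0 :=
  @IsOpen.mem_nhds _ awTopology _ _
    (TopologicalSpace.isOpen_generateFrom_of_mem ⟨f, 0, ε, hε, rfl⟩)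
    ((awSeminorm.seminorm f).mem_ball_self hε)

theorem summable_lpOne_mul (f : ℓ¹) (x : ℕ →ᵇ ℝ) : Summable fun n => f n * x n :=
  .of_norm (by simpa only [Real.norm_eq_abs, abs_mul] using awSeminorm_summable f x)

theorem norm_tsum_mul_le_awSeminorm (f : ℓ¹) (x : ℕ →ᵇ ℝ) :
    ‖∑' n, f n * x n‖ ≤ awSeminorm f x := by
  simpa only [Real.norm_eq_abs, abs_mul, awSeminorm] using
    norm_tsum_le_tsum_norm (summable_lpOne_mul f x).norm

noncomputable def toDualLpOne (x : ℕ →ᵇ ℝ) : ℓ¹ →L[ℝ] ℝ :=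
  LinearMap.mkContinuous
    { toFun := fun f => ∑' n, f n * x n
      map_add' := fun f g => by
        simp only [lp.coeFn_add, Pi.add_apply, add_mul]
        exact (summable_lpOne_mul f x).tsum_add (summable_lpOne_mul g x)
      map_smul' := fun c f => by
        simp only [lp.coeFn_smul, Pi.smul_apply, smul_eq_mul, RingHom.id_apply, mul_assoc]
        exact tsum_mul_left }
    ‖x‖ fun f => by
      simp only [LinearMap.coe_mk, AddHom.coe_mk]
      exact (norm_tsum_mul_le_awSeminorm f x).trans
        ((awSeminorm_le_norm_mul_norm f x).trans_eq (mul_comm _ _))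

@[simp]
theorem toDualLpOne_apply (x : ℕ →ᵇ ℝ) (f : ℓ¹) :
    toDualLpOne x f = ∑' n, f n * x n := rfl

theorem toDualLpOne_single (x : ℕ →ᵇ ℝ) (n : ℕ) : toDualLpOne x (lp.single 1 n 1) = x n := by
  rw [toDualLpOne_apply, tsum_eq_single n fun m hm => by rw [lp.single_apply_ne 1 n _ hm, zero_mul],
    lp.single_apply_self, one_mul]

theorem isBounded_of_isVonNBounded_awTopology {B : Set (ℕ →ᵇ ℝ)}
    (hB : @IsVonNBounded ℝ _ _ _ _ awTopology B) : IsBounded B := by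
  have hpt : ∀ f, ∃ C, ∀ x : B, ‖toDualLpOne x f‖ ≤ C := fun f => by
    obtain ⟨C, hC⟩ := @Seminorm.bddAbove_image_of_isVonNBounded _ _ _ _ _ awTopology _
      (awSeminorm.ball_mem_nhds f one_pos) _ hB
    exact ⟨C, fun x => (norm_tsum_mul_le_awSeminorm f x).trans (hC ⟨x, x.2, rfl⟩)⟩
  obtain ⟨C, hC⟩ := banach_steinhaus hpt
  refine isBounded_iff_forall_norm_le.2 ⟨max C 0, fun x hx =>
    (BoundedContinuousFunction.norm_le (le_max_right _ _)).2 fun n => ?_⟩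
  calc ‖x n‖ = ‖toDualLpOne x (lp.single 1 n 1)‖ := by rw [toDualLpOne_single]
    _ ≤ ‖toDualLpOne x‖ * ‖(lp.single 1 n 1 : ℓ¹)‖ := (toDualLpOne x).le_opNorm _
    _ ≤ C := by simpa [lp.norm_single] using hC ⟨x, hx⟩
    _ ≤ max C 0 := le_max_left _ _

theorem isVonNBounded_awTopology_iff {B : Set (ℕ →ᵇ ℝ)} :
    @IsVonNBounded ℝ _ _ _ _ awTopology B ↔ IsBounded B :=
  ⟨isBounded_of_isVonNBounded_awTopology, fun hB =>
    ((NormedSpace.isVonNBounded_iff ℝ).2 hB).of_topologicalSpace_le topologicalSpace_le_awTopology⟩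

noncomputable def unitVector (n : ℕ) : ℕ →ᵇ ℝ :=
  .mkOfDiscrete (Pi.single n 1) 1 fun a b => by
    simp only [Real.dist_eq, Pi.single_apply]
    split_ifs <;> norm_num

theorem unitVector_apply_self (n : ℕ) : unitVector n n = 1 := by simp [unitVector]

theorem awSeminorm_unitVector (f : ℓ¹) (n : ℕ) :
    awSeminorm f (unitVector n) = |f n| := by
  rw [awSeminorm, tsum_eq_single n fun m hm => by simp [unitVector, hm], unitVector_apply_self,
    abs_one, mul_one]

theorem tendsto_unitVector_awTopology :
    Tendsto unitVector atTop (@nhds _ awTopology 0) := by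
  refine TopologicalSpace.tendsto_nhds_generateFrom_iff.2 ?_
  rintro _ ⟨f, c, ε, -, rfl⟩ (h0 : awSeminorm f (0 - c) < ε)
  filter_upwards [(summable_abs_of_lpOne f).tendsto_atTop_zero.eventually_lt_const
    (sub_pos.2 h0)] with n hn
  calc awSeminorm f (unitVector n - c) = awSeminorm.seminorm f (unitVector n + (0 - c)) := by
        rw [zero_sub, ← sub_eq_add_neg]; rfl
    _ ≤ awSeminorm f (unitVector n) + awSeminorm f (0 - c) := map_add_le_add _ _ _
    _ < ε := by rw [awSeminorm_unitVector]; linarith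

theorem not_continuous_id_awTopology :
    ¬ @Continuous (ℕ →ᵇ ℝ) (ℕ →ᵇ ℝ) awTopology inferInstance id := by
  intro hcont
  obtain ⟨n, hn⟩ := (((@Continuous.tendsto _ _ awTopology _ _ hcont 0).comp
    tendsto_unitVector_awTopology).eventually (Metric.ball_mem_nhds 0 one_pos)).exists
  have h1 : (1 : ℝ) ≤ ‖unitVector n‖ := by
    simpa [unitVector_apply_self] using (unitVector n).norm_coe_le_norm n
  exact (mem_ball_zero_iff.1 hn).not_ge h1

theorem hasAMProperty_awTopology :
    @HasAMProperty (ℕ →ᵇ ℝ) _ _ _ awTopology := by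
  intro B hB
  obtain ⟨r, hr⟩ := (isVonNBounded_awTopology_iff.1 hB).subset_closedBall 0
  exact isVonNBounded_awTopology_iff.2 <| Metric.isBounded_closedBall.subset <|
    (BoundedContinuousFunction.supClosed_closedBall_zero r).finSups_subset hr

theorem hasLeviProperty_awTopology :
    @HasLeviProperty (ℕ →ᵇ ℝ) _ _ _ awTopology := fun _ hne _ _ hD =>
  BoundedContinuousFunction.exists_isLUB_of_isBounded hne (isVonNBounded_awTopology_iff.1 hD)

theorem orderBoundedOp_id_s19 {E : Type*} [Lattice E] [AddCommGroup E] [Module ℝ E] :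
    OrderBoundedOp (LinearMap.id : E →ₗ[ℝ] E) := fun A h₁ h₂ => by
  simpa only [LinearMap.id_coe, image_id] using ⟨h₁, h₂⟩

/-- ℓ∞ with the absolute weak topology has the AM and Levi properties, and
the identity into ℓ∞ with the norm topology is order bounded but not continuous. -/
theorem stmt19 :
    @HasAMProperty (BoundedContinuousFunction ℕ ℝ) _ _ _ awTopology ∧
    @HasLeviProperty (BoundedContinuousFunction ℕ ℝ) _ _ _ awTopology ∧
    OrderBoundedOp (LinearMap.id : (BoundedContinuousFunction ℕ ℝ) →ₗ[ℝ] (BoundedContinuousFunction ℕ ℝ)) ∧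
    ¬ @Continuous (BoundedContinuousFunction ℕ ℝ) (BoundedContinuousFunction ℕ ℝ) awTopology inferInstance id :=
  ⟨hasAMProperty_awTopology, hasLeviProperty_awTopology, orderBoundedOp_id_s19,
    not_continuous_id_awTopology⟩
end
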